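/- Let W ⊆ ℝ^{N×N} be an M-dimensional subspace of matrices. Suppose filters H₁,…,H_D are partitioned into k subsets V₁,…,V_k with W ⊆ Span(Vⱼ) for each j. Let X ∈ ℝ^{N×D} factor as X = ZA with Z ∈ ℝ^{N×k}. Then for any filters H'₁,…,H'_D ∈ W, coefficient matrix A' ∈ ℝ^{k×D}, and weights w' ∈ ℝ^D, there exist weights w ∈ ℝ^D such that Σᵢ wᵢ Hᵢ xᵢ = Σᵢ w'ᵢ H'ᵢ x'ᵢ, where xᵢ, x'ᵢ are the columns of X = ZA and X' = ZA' respectively and each subset Vⱼ mixes only columns expressible through zⱼ. -/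

import Mathlib

/-!
The response of a filter `F ∈ W` to the `i`-th column of `Z A'` is a combination of its
responses to the columns `z_j` of `Z`. Since `W ⊆ span (H '' V_j)` and `F ↦ F z_j` is linear,
`F z_j` lies in the span of the responses `H_i z_j = H_i x_i` with `i ∈ V_j`, so the target
output lies in the span of the channels `H_i x_i` and its coefficients are the new weights.
-/

open Matrix

section SpanResponses

variable {R ι κ m n : Type*} [CommSemiring R] [Fintype n] [Fintype κ]

theorem Matrix.mulVec_mem_span_image_mulVec {H : ι → Matrix m n R} {s : Set ι}
    {F : Matrix m n R} (hF : F ∈ Submodule.span R (H '' s)) (u : n → R) :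
    F *ᵥ u ∈ Submodule.span R ((fun i => H i *ᵥ u) '' s) := by
  have h := Submodule.apply_mem_span_image_of_mem_span ((mulVecBilin R R).flip u) hF
  rwa [Set.image_image] at h

theorem Matrix.mulVec_mulVec_mem_span_range {H : ι → Matrix m n R} {g : ι → κ}
    {Z : Matrix n κ R} {F : Matrix m n R}
    (hF : ∀ j, F ∈ Submodule.span R (H '' {i | g i = j})) (a : κ → R) :
    F *ᵥ (Z *ᵥ a) ∈ Submodule.span R (Set.range fun i => H i *ᵥ Zᵀ (g i)) := by
  have hZa : Z *ᵥ a = ∑ j, a j • Zᵀ j := by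
    ext; simp [mulVec, dotProduct, mul_comm]
  rw [hZa, mulVec_sum]
  refine Submodule.sum_mem _ fun j _ => ?_
  rw [mulVec_smul]
  refine Submodule.smul_mem _ _ (Submodule.span_mono ?_ (mulVec_mem_span_image_mulVec (hF j) _))
  rintro _ ⟨i, rfl, rfl⟩
  exact ⟨i, rfl⟩

end SpanResponses

theorem stmt_2_general (N D k : ℕ)
    (W : Submodule ℝ (Matrix (Fin N) (Fin N) ℝ))
    (H : Fin D → Matrix (Fin N) (Fin N) ℝ) (g : Fin D → Fin k)
    (hspan : ∀ j : Fin k, W ≤ Submodule.span ℝ (H '' {i | g i = j}))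
    (Z : Matrix (Fin N) (Fin k) ℝ)
    (X : Matrix (Fin N) (Fin D) ℝ)
    (hcol : ∀ i : Fin D, (fun n => X n i) = fun n => Z n (g i))
    (H' : Fin D → Matrix (Fin N) (Fin N) ℝ) (hH' : ∀ i, H' i ∈ W)
    (A' : Matrix (Fin k) (Fin D) ℝ) (w' : Fin D → ℝ) :
    ∃ w : Fin D → ℝ,
      (∑ i : Fin D, w i • (H i *ᵥ fun n => X n i)) =
        ∑ i : Fin D, w' i • (H' i *ᵥ fun n => (Z * A') n i) := by
  have hmem : (∑ i, w' i • (H' i *ᵥ fun n => (Z * A') n i)) ∈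
      Submodule.span ℝ (Set.range fun i => H i *ᵥ Zᵀ (g i)) :=
    Submodule.sum_mem _ fun i _ => Submodule.smul_mem _ _
      (mulVec_mulVec_mem_span_range (fun j => hspan j (hH' i)) (A'ᵀ i))
  obtain ⟨w, hw⟩ := (Submodule.mem_span_range_iff_exists_fun ℝ).mp hmem
  refine ⟨w, ?_⟩
  rw [← hw]
  simp only [hcol]
  rfl

/-- Proposition 1: with M–k spanned spatial filters H and rank-k input X = Z A whose
columns align with the basis columns of Z by group, adjusting only the channel mixing
weights reproduces any ConvMixer block with filters in W. -/
theorem stmt_2 (N D k M : ℕ)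
    (W : Submodule ℝ (Matrix (Fin N) (Fin N) ℝ)) (hW : Module.finrank ℝ W = M)
    (H : Fin D → Matrix (Fin N) (Fin N) ℝ) (g : Fin D → Fin k)
    (hspan : ∀ j : Fin k, W ≤ Submodule.span ℝ (H '' {i | g i = j}))
    (Z : Matrix (Fin N) (Fin k) ℝ)
    (X : Matrix (Fin N) (Fin D) ℝ) (A : Matrix (Fin k) (Fin D) ℝ) (hXA : X = Z * A)
    (hcol : ∀ i : Fin D, (fun n => X n i) = fun n => Z n (g i))
    (H' : Fin D → Matrix (Fin N) (Fin N) ℝ) (hH' : ∀ i, H' i ∈ W)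
    (A' : Matrix (Fin k) (Fin D) ℝ) (w' : Fin D → ℝ) :
    ∃ w : Fin D → ℝ,
      (∑ i : Fin D, w i • (H i *ᵥ fun n => X n i)) =
        ∑ i : Fin D, w' i • (H' i *ᵥ fun n => (Z * A') n i) :=
  stmt_2_general N D k W H g hspan Z X hcol H' hH' A' w'
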